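/- arXiv:2502.14250 — 3 statements merged into one kernel-verified Lean document; each statement's English description precedes it below -/
import Mathlib

section
/- Let D1 > 0, D2 > 0, n_eff > 1, λ > 0, n ≥ 1 a natural number. Define f(x) = sqrt(x² + D1) + n_eff·(x + D2), δ = f(0) - λ·⌊f(0)/λ⌋, and k_n* = (f(0) - δ)/λ + ⌈δ/λ⌉ + (n-1). If Δ ≥ 0 satisfies f(Δ) = k_n*·λ, then Δ < n·λ. -/
theorem stmt_2 (D1 D2 neff lam : ℝ) (hD1 : 0 < D1) (hD2 : 0 < D2)
    (hneff : 1 < neff) (hlam : 0 < lam) (n : ℕ) (hn : 1 ≤ n)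
    (f : ℝ → ℝ) (hf : ∀ x, f x = Real.sqrt (x ^ 2 + D1) + neff * (x + D2))
    (δ : ℝ) (hδ : δ = f 0 - lam * ⌊f 0 / lam⌋)
    (kstar : ℝ) (hk : kstar = (f 0 - δ) / lam + (⌈δ / lam⌉ : ℝ) + ((n : ℝ) - 1))
    (Δ : ℝ) (hΔ : 0 ≤ Δ) (heq : f Δ = kstar * lam) :
    Δ < n * lam := by
  have hn1 : (1 : ℝ) ≤ (n : ℝ) := by exact_mod_cast hn
  -- ceil bound: lam * ⌈δ/lam⌉ < δ + lam
  have hceil : (⌈δ / lam⌉ : ℝ) < δ / lam + 1 := Int.ceil_lt_add_one _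
  have hceil' : lam * (⌈δ / lam⌉ : ℝ) < δ + lam := by
    have := mul_lt_mul_of_pos_left hceil hlam
    calc lam * (⌈δ / lam⌉ : ℝ) < lam * (δ / lam + 1) := this
      _ = δ + lam := by field_simp
  -- kstar * lam < f 0 + n * lam
  have hkl : kstar * lam < f 0 + n * lam := by
    rw [hk]
    have : ((f 0 - δ) / lam + (⌈δ / lam⌉ : ℝ) + ((n : ℝ) - 1)) * lam
        = (f 0 - δ) + lam * (⌈δ / lam⌉ : ℝ) + ((n : ℝ) - 1) * lam := by
      field_simp
    rw [this]
    nlinarith [hceil']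
  -- f Δ ≥ f 0 + neff * Δ
  have hsqrt : Real.sqrt ((0:ℝ) ^ 2 + D1) ≤ Real.sqrt (Δ ^ 2 + D1) := by
    apply Real.sqrt_le_sqrt; nlinarith [sq_nonneg Δ]
  have hf0 : f 0 + neff * Δ ≤ f Δ := by
    rw [hf, hf]; nlinarith [hsqrt]
  have hne : neff * Δ < (n : ℝ) * lam := by
    have : f 0 + neff * Δ < f 0 + n * lam := by
      calc f 0 + neff * Δ ≤ f Δ := hf0
        _ = kstar * lam := heq
        _ < f 0 + n * lam := hkl
    linarith
  rcases eq_or_lt_of_le hΔ with h | h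
  · rw [← h]; positivity
  · nlinarith
end

section
/- Let h₁ ≤ h₂ ≤ … ≤ h_M be positive reals, σ² > 0, R_t ≥ 0, and let p* be the power allocation defined by p_m* = ((2^{R_t}-1)/2^{R_t})·(P_max - Σ_{j<m} p_j* + σ²/h_m) for m < M and p_M* = P_max - Σ_{m<M} p_m*. Then for every m < M, the achieved rate log₂(1 + h_m p_m*/(h_m Σ_{j>m} p_j* + σ²)) equals R_t. -/
/-! Write `R = P_max - ∑_{j<m} p_j` for the power left to users `m, …, M-1` (so the interference
on user `m` is `R - p_m`) and `A = R + σ²/h_m`. The recursion says `p_m = (1 - 2^{-R_t}) A`, hence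
the interference-plus-noise is `h_m (R - p_m) + σ² = h_m A 2^{-R_t}` and the SINR is exactly
`2^{R_t} - 1`. This needs `A ≠ 0`, which holds because `R = ∑_{j ≥ m} p_j ≥ 0`. -/

open Finset

theorem sum_range_eq_of_last {M : ℕ} (hM : 0 < M) {f : ℕ → ℝ} {P : ℝ}
    (hlast : f (M - 1) = P - ∑ j ∈ range (M - 1), f j) :
    ∑ j ∈ range M, f j = P := by
  obtain ⟨n, rfl⟩ := Nat.exists_eq_add_of_lt hM
  rw [Nat.zero_add, Nat.add_sub_cancel] at hlast
  rw [Nat.zero_add, sum_range_succ, hlast]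
  ring

theorem one_add_div_interference_eq {E g R σ2 : ℝ} (hE : E ≠ 0) (hg : g ≠ 0)
    (hA : R + σ2 / g ≠ 0) :
    1 + g * ((E - 1) / E * (R + σ2 / g)) / (g * (R - (E - 1) / E * (R + σ2 / g)) + σ2) = E := by
  have hnoise : g * (R - (E - 1) / E * (R + σ2 / g)) + σ2 = g * (R + σ2 / g) / E := by
    field_simp
    ring
  rw [hnoise]
  generalize R + σ2 / g = A at hA ⊢
  field_simp
  ring

theorem stmt_13_general (M : ℕ) (h : ℕ → ℝ) (hh : ∀ m < M, 0 < h m)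
    (σ2 Pmax Rt : ℝ) (hσ : 0 < σ2)
    (p : ℕ → ℝ)
    (hrec : ∀ m, m + 1 < M →
      p m = ((2 : ℝ) ^ Rt - 1) / (2 : ℝ) ^ Rt *
        (Pmax - (∑ j ∈ Finset.range m, p j) + σ2 / h m))
    (hlast : p (M - 1) = Pmax - ∑ j ∈ Finset.range (M - 1), p j)
    (hnonneg : ∀ m < M, 0 ≤ p m) :
    ∀ m, m + 1 < M →
      Real.logb 2 (1 + h m * p m /
        (h m * (∑ j ∈ Finset.Ico (m + 1) M, p j) + σ2)) = Rt := by
  intro m hm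
  have hhm : 0 < h m := hh m (by omega)
  have htotal : ∑ j ∈ range M, p j = Pmax := sum_range_eq_of_last (by omega) hlast
  have hresidual : 0 ≤ Pmax - ∑ j ∈ range m, p j := by
    rw [← htotal, ← sum_Ico_eq_sub _ (by omega)]
    exact sum_nonneg fun j hj => hnonneg j (mem_Ico.mp hj).2
  have hinterference : ∑ j ∈ Ico (m + 1) M, p j = (Pmax - ∑ j ∈ range m, p j) - p m := by
    rw [sum_Ico_eq_sub _ (by omega), sum_range_succ, htotal]
    ring
  have hA : Pmax - ∑ j ∈ range m, p j + σ2 / h m ≠ 0 := by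
    have := div_pos hσ hhm
    positivity
  rw [hinterference, hrec m hm,
    one_add_div_interference_eq (by positivity) hhm.ne' hA,
    Real.logb_rpow two_pos (by norm_num)]

theorem stmt_13 (M : ℕ) (hM : 1 ≤ M) (h : ℕ → ℝ) (hh : ∀ m < M, 0 < h m)
    (hsorted : ∀ i j, i ≤ j → j < M → h i ≤ h j)
    (σ2 Pmax Rt : ℝ) (hσ : 0 < σ2) (hPmax : 0 < Pmax) (hRt : 0 ≤ Rt)
    (p : ℕ → ℝ)
    (hrec : ∀ m, m + 1 < M →
      p m = ((2 : ℝ) ^ Rt - 1) / (2 : ℝ) ^ Rt *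
        (Pmax - (∑ j ∈ Finset.range m, p j) + σ2 / h m))
    (hlast : p (M - 1) = Pmax - ∑ j ∈ Finset.range (M - 1), p j)
    (hnonneg : ∀ m < M, 0 ≤ p m) :
    ∀ m, m + 1 < M →
      Real.logb 2 (1 + h m * p m /
        (h m * (∑ j ∈ Finset.Ico (m + 1) M, p j) + σ2)) = Rt :=
  stmt_13_general M h hh σ2 Pmax Rt hσ p hrec hlast hnonneg
end

section
/- For fixed total power P and two users with gains h₁ ≤ h₂, the function p₁ ↦ log₂(1 + h₁ p₁/(h₁(P - p₁) + σ²)) + log₂(1 + h₂(P - p₁)/σ²) is decreasing in p₁ on [0, P]. -/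
theorem stmt_15 (h1 h2 P σ2 : ℝ) (hh1 : 0 < h1) (hle : h1 ≤ h2)
    (hP : 0 < P) (hσ : 0 < σ2) :
    AntitoneOn (fun p1 =>
        Real.logb 2 (1 + h1 * p1 / (h1 * (P - p1) + σ2)) +
          Real.logb 2 (1 + h2 * (P - p1) / σ2))
      (Set.Icc (0 : ℝ) P) := by
  intro x hx y hy hxy
  simp only [Set.mem_Icc] at hx hy
  have Dx : 0 < h1 * (P - x) + σ2 := by nlinarith [hx.1, hx.2]
  have Dy : 0 < h1 * (P - y) + σ2 := by nlinarith [hy.1, hy.2]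
  have Ax : 0 < 1 + h1 * x / (h1 * (P - x) + σ2) := by
    have : 0 ≤ h1 * x / (h1 * (P - x) + σ2) :=
      div_nonneg (by nlinarith [hx.1]) Dx.le
    linarith
  have Ay : 0 < 1 + h1 * y / (h1 * (P - y) + σ2) := by
    have : 0 ≤ h1 * y / (h1 * (P - y) + σ2) :=
      div_nonneg (by nlinarith [hy.1]) Dy.le
    linarith
  have Bx : 0 < 1 + h2 * (P - x) / σ2 := by
    have : 0 ≤ h2 * (P - x) / σ2 := by
      apply div_nonneg _ hσ.le
      have : 0 ≤ P - x := by linarith [hx.2]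
      nlinarith
    linarith
  have By : 0 < 1 + h2 * (P - y) / σ2 := by
    have : 0 ≤ h2 * (P - y) / σ2 := by
      apply div_nonneg _ hσ.le
      have : 0 ≤ P - y := by linarith [hy.2]
      nlinarith
    linarith
  simp only
  rw [← Real.logb_mul (ne_of_gt Ay) (ne_of_gt By),
      ← Real.logb_mul (ne_of_gt Ax) (ne_of_gt Bx)]
  apply Real.logb_le_logb_of_le one_lt_two (by positivity)
  have key : (1 + h1 * y / (h1 * (P - y) + σ2)) * (1 + h2 * (P - y) / σ2) ≤
      (1 + h1 * x / (h1 * (P - x) + σ2)) * (1 + h2 * (P - x) / σ2) := by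
    rw [one_add_div (ne_of_gt Dy), one_add_div (ne_of_gt Dx),
        one_add_div (ne_of_gt hσ), one_add_div (ne_of_gt hσ),
        div_mul_div_comm, div_mul_div_comm,
        div_le_div_iff₀ (by positivity) (by positivity)]
    nlinarith [mul_nonneg (mul_nonneg (mul_nonneg (mul_nonneg
      (by nlinarith : (0:ℝ) ≤ h1 * P + σ2) hσ.le) hσ.le)
      (sub_nonneg.2 hle)) (sub_nonneg.2 hxy)]
  exact key
end
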